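/- arXiv:1611.10260 — 3 statements merged into one kernel-verified Lean document; each statement's English description precedes it below -/
import Mathlib

section
/- For any t > 0 and R > 0, the limit as ε → 0⁺ of ∫_ε^t ∫_{B_R} ∂₁²K(y,τ) dy dτ equals -½ e^{-R²/(4t)}, where B_R is the ball of radius R centered at the origin in ℝ². -/
open Real MeasureTheory Filter Metric Set Topology

/-!
Swapping the two coordinates preserves `B_R` and Lebesgue measure, so `∂₁²K` may be replaced by its
average with `∂₂²K`, that is by the radial function `½ ΔK`. In polar coordinates its integral over
`B_R` is `-(R²/(8τ²)) e^{-R²/(4τ)}`, the `τ`-derivative of `-½ e^{-R²/(4τ)}`, and the boundary term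
`½ e^{-R²/(4ε)}` at `τ = ε` vanishes as `ε → 0⁺`.
-/

section ClosedBall

variable {E F : Type*} [NormedAddCommGroup E] [InnerProductSpace ℝ E] [FiniteDimensional ℝ E]
  [MeasurableSpace E] [BorelSpace E] [NormedAddCommGroup F] [NormedSpace ℝ F]

theorem LinearIsometryEquiv.setIntegral_closedBall_comp (L : E ≃ₗᵢ[ℝ] E) (f : E → F) (R : ℝ) :
    ∫ x in closedBall 0 R, f (L x) = ∫ x in closedBall 0 R, f x := by
  simpa using L.measurePreserving.setIntegral_preimage_emb
    L.toHomeomorph.toMeasurableEquiv.measurableEmbedding f (closedBall 0 R)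

theorem LinearIsometryEquiv.setIntegral_closedBall_eq_half_add_comp (L : E ≃ₗᵢ[ℝ] E) {f : E → F}
    (hf : Continuous f) (R : ℝ) :
    ∫ x in closedBall 0 R, f x = (1 / 2 : ℝ) • ∫ x in closedBall 0 R, (f x + f (L x)) := by
  have hint (g : E → F) (hg : Continuous g) : IntegrableOn g (closedBall 0 R) :=
    hg.continuousOn.integrableOn_compact (isCompact_closedBall 0 R)
  rw [integral_add (hint f hf) (hint (fun x => f (L x)) (hf.comp L.continuous)),
    L.setIntegral_closedBall_comp,
    ← two_smul ℝ, smul_smul]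
  norm_num

theorem setIntegral_closedBall_fun_norm_addHaar [Nontrivial E] (μ : Measure E)
    [μ.IsAddHaarMeasure] (f : ℝ → F) (R : ℝ) :
    ∫ x in closedBall 0 R, f ‖x‖ ∂μ =
      Module.finrank ℝ E • μ.real (ball 0 1) •
        ∫ r in Ioc 0 R, r ^ (Module.finrank ℝ E - 1) • f r := by
  have hball : closedBall (0 : E) R = (fun x => ‖x‖) ⁻¹' Iic R := by
    ext x; simp
  rw [← integral_indicator measurableSet_closedBall, hball, ← Ioi_inter_Iic,
    ← setIntegral_indicator measurableSet_Iic]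
  simp_rw [indicator_smul_apply]
  refine Eq.trans ?_ (integral_fun_norm_addHaar μ ((Iic R).indicator f))
  congr 1 with x

end ClosedBall

theorem EuclideanSpace.setIntegral_closedBall_fun_norm_fin_two {F : Type*}
    [NormedAddCommGroup F] [NormedSpace ℝ F] (f : ℝ → F) {R : ℝ} (hR : 0 ≤ R) :
    ∫ x in closedBall (0 : EuclideanSpace ℝ (Fin 2)) R, f ‖x‖ =
      (2 * π) • ∫ r in 0..R, r • f r := by
  rw [setIntegral_closedBall_fun_norm_addHaar, intervalIntegral.integral_of_le hR]
  simp [Measure.real, pi_pos.le, mul_smul, ← Nat.cast_smul_eq_nsmul ℝ]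

/-- `∂₁²K(y, τ)` for the heat kernel `K(x, t) = e^{-|x|²/(4t)} / (4πt)` on `ℝ²`. -/
noncomputable def heatKernelSecondDeriv (τ : ℝ) (y : EuclideanSpace ℝ (Fin 2)) : ℝ :=
  (1 / (8 * π * τ ^ 2)) * ((y 0) ^ 2 / (2 * τ) - 1) * Real.exp (-‖y‖ ^ 2 / (4 * τ))

theorem integral_radial_heatKernel_profile (τ R : ℝ) :
    ∫ r in (0 : ℝ)..R, r / (4 * τ ^ 2) * (r ^ 2 / (4 * τ) - 1) * exp (-r ^ 2 / (4 * τ)) =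
      -(R ^ 2 / (8 * τ ^ 2)) * exp (-R ^ 2 / (4 * τ)) := by
  have hderiv (r : ℝ) : HasDerivAt (fun r => -(r ^ 2 / (8 * τ ^ 2)) * exp (-r ^ 2 / (4 * τ)))
      (r / (4 * τ ^ 2) * (r ^ 2 / (4 * τ) - 1) * exp (-r ^ 2 / (4 * τ))) r := by
    have hsq := hasDerivAt_pow 2 r
    exact (((hsq.div_const (8 * τ ^ 2)).neg).mul ((hsq.neg.div_const (4 * τ)).exp)).congr_deriv
      (by simp only [Pi.neg_apply]; ring)
  rw [intervalIntegral.integral_eq_sub_of_hasDerivAt (fun r _ => hderiv r)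
    (Continuous.intervalIntegrable (by fun_prop) _ _)]
  simp

theorem setIntegral_closedBall_heatKernelSecondDeriv (τ : ℝ) {R : ℝ} (hR : 0 ≤ R) :
    ∫ y in closedBall (0 : EuclideanSpace ℝ (Fin 2)) R, heatKernelSecondDeriv τ y =
      -(R ^ 2 / (8 * τ ^ 2)) * exp (-R ^ 2 / (4 * τ)) := by
  set k : ℝ → ℝ := fun r => 1 / (8 * π * τ ^ 2) * (r ^ 2 / (4 * τ) - 1) * exp (-r ^ 2 / (4 * τ))
  have hsymm : ∫ y in closedBall (0 : EuclideanSpace ℝ (Fin 2)) R, heatKernelSecondDeriv τ y =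
      ∫ y in closedBall (0 : EuclideanSpace ℝ (Fin 2)) R, k ‖y‖ := by
    let swap := LinearIsometryEquiv.piLpCongrLeft 2 ℝ ℝ (Equiv.swap (0 : Fin 2) 1)
    rw [swap.setIntegral_closedBall_eq_half_add_comp (by unfold heatKernelSecondDeriv; fun_prop),
      ← integral_smul]
    congr 1 with y
    have hswap : swap y 0 = y 1 := rfl
    have hnorm : ‖y‖ ^ 2 = y 0 ^ 2 + y 1 ^ 2 := by
      simp [EuclideanSpace.norm_sq_eq, Fin.sum_univ_two]
    simp only [heatKernelSecondDeriv, k, hswap, swap.norm_map, hnorm, smul_eq_mul]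
    ring
  calc ∫ y in closedBall (0 : EuclideanSpace ℝ (Fin 2)) R, heatKernelSecondDeriv τ y
      = (2 * π) • ∫ r in 0..R, r • k r := by
        rw [hsymm, EuclideanSpace.setIntegral_closedBall_fun_norm_fin_two k hR]
    _ = ∫ r in (0 : ℝ)..R, r / (4 * τ ^ 2) * (r ^ 2 / (4 * τ) - 1) * exp (-r ^ 2 / (4 * τ)) := by
        rw [← intervalIntegral.integral_smul]
        congr 1 with r
        simp only [k, smul_eq_mul]
        field_simp
        ring
    _ = _ := integral_radial_heatKernel_profile τ R

theorem hasDerivAt_exp_neg_sq_div (R : ℝ) {τ : ℝ} (hτ : τ ≠ 0) :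
    HasDerivAt (fun τ => exp (-R ^ 2 / (4 * τ)))
      (R ^ 2 / (4 * τ ^ 2) * exp (-R ^ 2 / (4 * τ))) τ := by
  have hinv := (hasDerivAt_inv hτ).const_mul (-R ^ 2 / 4)
  refine (hinv.exp.congr_deriv ?_).congr_of_eventuallyEq ?_
  · field_simp
  · filter_upwards with x
    ring_nf

theorem integral_neg_sq_div_mul_exp_neg_sq_div (R : ℝ) {ε t : ℝ} (hε : 0 < ε) (ht : 0 < t) :
    ∫ τ in ε..t, -(R ^ 2 / (8 * τ ^ 2)) * exp (-R ^ 2 / (4 * τ)) =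
      -(1 / 2) * exp (-R ^ 2 / (4 * t)) + (1 / 2) * exp (-R ^ 2 / (4 * ε)) := by
  have hpos : ∀ τ ∈ uIcc ε t, 0 < τ := fun τ hτ => lt_of_lt_of_le (lt_min hε ht) hτ.1
  rw [intervalIntegral.integral_eq_sub_of_hasDerivAt
    (f := fun τ => -(1 / 2) * exp (-R ^ 2 / (4 * τ)))
    (fun τ hτ => ((hasDerivAt_exp_neg_sq_div R (hpos τ hτ).ne').const_mul _).congr_deriv (by ring))
    (ContinuousOn.intervalIntegrable fun τ hτ => by
      have := (hpos τ hτ).ne'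
      fun_prop (disch := simpa))]
  ring

theorem tendsto_exp_neg_sq_div_nhdsGT_zero {R : ℝ} (hR : R ≠ 0) :
    Tendsto (fun ε => exp (-R ^ 2 / (4 * ε))) (𝓝[>] 0) (𝓝 0) := by
  have hdiv : Tendsto (fun ε : ℝ => R ^ 2 / 4 * ε⁻¹) (𝓝[>] 0) atTop :=
    tendsto_inv_nhdsGT_zero.const_mul_atTop (by positivity)
  refine (tendsto_exp_neg_atTop_nhds_zero.comp hdiv).congr fun ε => ?_
  simp only [Function.comp_apply]
  ring_nf

/-- For any `t > 0` and `R > 0`, the limit as `ε → 0⁺` of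
`∫_ε^t ∫_{B_R} ∂₁²K(y,τ) dy dτ` equals `-½ e^{-R²/(4t)}`, where
`∂₁²K(y,τ) = (1/(8πτ²))((y₁²/(2τ)) - 1) e^{-|y|²/(4τ)}` and `B_R` is the centered ball of
radius `R` in `ℝ²`. -/
theorem heat_kernel_time_space_cancellation (t R : ℝ) (ht : 0 < t) (hR : 0 < R) :
    Tendsto (fun ε : ℝ =>
        ∫ τ in ε..t, ∫ y in Metric.closedBall (0 : EuclideanSpace ℝ (Fin 2)) R,
          (1 / (8 * π * τ ^ 2)) * ((y 0) ^ 2 / (2 * τ) - 1) * Real.exp (-‖y‖ ^ 2 / (4 * τ)))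
      (nhdsWithin 0 (Set.Ioi 0))
      (nhds (-(1 / 2) * Real.exp (-R ^ 2 / (4 * t)))) := by
  have hclosed (ε : ℝ) (hε : 0 < ε) :
      -(1 / 2) * exp (-R ^ 2 / (4 * t)) + (1 / 2) * exp (-R ^ 2 / (4 * ε)) =
        ∫ τ in ε..t, ∫ y in closedBall (0 : EuclideanSpace ℝ (Fin 2)) R,
          heatKernelSecondDeriv τ y := by
    rw [← integral_neg_sq_div_mul_exp_neg_sq_div R hε ht]
    exact intervalIntegral.integral_congr fun τ _ =>
      (setIntegral_closedBall_heatKernelSecondDeriv τ hR.le).symm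
  have hlim := tendsto_const_nhds (x := -(1 / 2) * exp (-R ^ 2 / (4 * t))).add
    ((tendsto_exp_neg_sq_div_nhdsGT_zero hR.ne').const_mul (1 / 2))
  rw [mul_zero, add_zero] at hlim
  exact hlim.congr' (eventually_nhdsWithin_of_forall hclosed)
end

section
/- For x ∈ ℝ², x ≠ 0, and t > 0, the gradient-type identity ∂₁ of the function Φ(x,t) = (1/(2π))( log|x| + (1/2)∫_{|x|²/(4t)}^∞ (e^{-z}/z) dz ) equals (1/(2π)) (x₁/|x|²) (1 - e^{-|x|²/(4t)}). -/
/-!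
With `ρ = x₁² + x₂²` and the exponential integral `E₁(u) = ∫_u^∞ e^{-z}/z dz`, the potential is
`(1/(2π)) (log √ρ + E₁(ρ/(4t))/2)`. By the fundamental theorem of calculus for the tail
integral, `E₁'(u) = -e^{-u}/u`, so as a function of `ρ` the potential has derivative
`(1/(2π)) (1/(2ρ) - (1/2) e^{-ρ/(4t)}/ρ) = (1/(2π)) (1 - e^{-ρ/(4t)})/(2ρ)`;
the chain rule with `∂ρ/∂x₁ = 2x₁` gives the formula.
-/

open Real MeasureTheory Set Filter Topology

theorem hasDerivAt_setIntegral_Ioi {E : Type*} [NormedAddCommGroup E] [NormedSpace ℝ E]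
    [CompleteSpace E] {f : ℝ → E} {a s : ℝ} (has : a < s) (hf : IntegrableOn f (Ioi a))
    (hmeas : StronglyMeasurableAtFilter f (𝓝 s)) (hs : ContinuousAt f s) :
    HasDerivAt (fun u => ∫ z in Ioi u, f z) (-f s) s := by
  have hint : IntervalIntegrable f volume a s :=
    (intervalIntegrable_iff_integrableOn_Ioc_of_le has.le).2 (hf.mono_set Ioc_subset_Ioi_self)
  have htail : (fun u => ∫ z in Ioi u, f z)
      =ᶠ[𝓝 s] fun u => (∫ z in Ioi a, f z) - ∫ z in a..u, f z := by
    filter_upwards [eventually_gt_nhds has] with u hu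
    rw [← intervalIntegral.integral_Ioi_sub_Ioi hf hu.le, sub_sub_cancel]
  exact ((intervalIntegral.integral_hasDerivAt_right hint hmeas hs).const_sub _)
    |>.congr_of_eventuallyEq htail

noncomputable def expIntegralE₁ (u : ℝ) : ℝ := ∫ z in Ioi u, exp (-z) / z

theorem integrableOn_exp_neg_div_Ioi {c : ℝ} (hc : 0 < c) :
    IntegrableOn (fun z => exp (-z) / z) (Ioi c) := by
  refine ((exp_neg_integrableOn_Ioi c one_pos).const_mul c⁻¹).mono'
    (by fun_prop : Measurable fun z : ℝ => exp (-z) / z).aestronglyMeasurable ?_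
  filter_upwards [ae_restrict_mem measurableSet_Ioi] with z hz
  have hz0 : 0 < z := hc.trans hz
  rw [norm_of_nonneg (by positivity), neg_one_mul, div_eq_inv_mul]
  gcongr
  exact hz.le

theorem hasDerivAt_expIntegralE₁ {s : ℝ} (hs : 0 < s) :
    HasDerivAt expIntegralE₁ (-(exp (-s) / s)) s := by
  have hmeas : Measurable fun z : ℝ => exp (-z) / z := by fun_prop
  exact hasDerivAt_setIntegral_Ioi (half_lt_self hs) (integrableOn_exp_neg_div_Ioi (half_pos hs))
    hmeas.stronglyMeasurable.stronglyMeasurableAtFilter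
    (by fun_prop (disch := exact hs.ne'))

theorem hasDerivAt_log_sqrt_add_half_expIntegralE₁_div {ρ c : ℝ} (hρ : 0 < ρ) (hc : 0 < c) :
    HasDerivAt (fun r => log √r + 1 / 2 * expIntegralE₁ (r / c))
      ((1 - exp (-(ρ / c))) / (2 * ρ)) ρ := by
  have hlog : HasDerivAt (fun r => log √r) (1 / (2 * √ρ) / √ρ) ρ :=
    (hasDerivAt_sqrt hρ.ne').log (sqrt_pos.2 hρ).ne'
  have hE₁ := ((hasDerivAt_expIntegralE₁ (div_pos hρ hc)).comp ρ
    ((hasDerivAt_id ρ).div_const c)).const_mul (1 / 2)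
  refine (hlog.add hE₁).congr_deriv ?_
  field_simp
  rw [sq_sqrt hρ.le]
  ring

/-- For `x = (x₁,x₂) ∈ ℝ²`, `x ≠ 0`, and `t > 0`, the partial derivative in `x₁` of
`Φ(x,t) = (1/(2π))( log|x| + (1/2)∫_{|x|²/(4t)}^∞ e^{-z}/z dz )` equals
`(1/(2π)) (x₁/|x|²) (1 - e^{-|x|²/(4t)})`. -/
theorem deriv_heat_laplace_potential (x₁ x₂ t : ℝ) (hx : ¬(x₁ = 0 ∧ x₂ = 0)) (ht : 0 < t) :
    deriv (fun a : ℝ => (1 / (2 * π)) * (Real.log (Real.sqrt (a ^ 2 + x₂ ^ 2))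
        + (1 / 2) * ∫ z in Set.Ioi ((a ^ 2 + x₂ ^ 2) / (4 * t)), Real.exp (-z) / z)) x₁
      = (1 / (2 * π)) * (x₁ / (x₁ ^ 2 + x₂ ^ 2))
          * (1 - Real.exp (-(x₁ ^ 2 + x₂ ^ 2) / (4 * t))) := by
  have hρ : 0 < x₁ ^ 2 + x₂ ^ 2 := by
    rcases not_and_or.1 hx with h | h <;> positivity
  have hsq : HasDerivAt (fun a : ℝ => a ^ 2 + x₂ ^ 2) (2 * x₁) x₁ := by
    simpa using (hasDerivAt_pow 2 x₁).add_const (x₂ ^ 2)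
  have hΦ := ((hasDerivAt_log_sqrt_add_half_expIntegralE₁_div hρ (by positivity : 0 < 4 * t)).comp
    x₁ hsq).const_mul (1 / (2 * π))
  refine hΦ.deriv.trans ?_
  rw [neg_div]
  field_simp
end

section
/- For a U-Lipschitz function d : [0,t] → ℝ with min value ε > 0 and d(t) ≤ 2ε, the bound ∫₀^t (d(t-τ)²/(8τ²)) e^{-d(t-τ)²/(4τ)} dτ ≤ 4 + (U²/4) t holds. -/
/-!
Write `D = d (t - τ)`. The minimum gives `ε ≤ D`, and the Lipschitz bound from `τ = 0` gives
`D ≤ 2ε + Uτ`, so `D² ≤ 8ε² + 2U²τ²`. Hence the integrand is at most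
`(ε²/τ²) e^{-ε²/(4τ)} + U²/4`, whose antiderivative `4 e^{-ε²/(4τ)} + U²τ/4` extends
continuously by `0` at `τ = 0` (this is `expNegInvGlue`), and is at most `4 + U²t/4` at `τ = t`.
-/

open Real MeasureTheory Set

lemma sq_div_mul_exp_neg_le {ε D U τ : ℝ} (hτ : 0 < τ) (hε : 0 ≤ ε) (hεD : ε ≤ D)
    (hD : D ≤ 2 * ε + U * τ) :
    D ^ 2 / (8 * τ ^ 2) * exp (-D ^ 2 / (4 * τ))
      ≤ ε ^ 2 / τ ^ 2 * exp (-ε ^ 2 / (4 * τ)) + U ^ 2 / 4 := by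
  have hD2 : D ^ 2 ≤ 8 * ε ^ 2 + 2 * U ^ 2 * τ ^ 2 := by
    nlinarith [sq_nonneg (2 * ε - U * τ)]
  have hexp : exp (-D ^ 2 / (4 * τ)) ≤ exp (-ε ^ 2 / (4 * τ)) := by
    have := pow_le_pow_left₀ hε hεD 2
    gcongr
  have hexp_le_one : exp (-ε ^ 2 / (4 * τ)) ≤ 1 :=
    exp_le_one_iff.2 (div_nonpos_of_nonpos_of_nonneg (by nlinarith) (by positivity))
  calc D ^ 2 / (8 * τ ^ 2) * exp (-D ^ 2 / (4 * τ))
      ≤ (8 * ε ^ 2 + 2 * U ^ 2 * τ ^ 2) / (8 * τ ^ 2) * exp (-ε ^ 2 / (4 * τ)) := by gcongr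
    _ = ε ^ 2 / τ ^ 2 * exp (-ε ^ 2 / (4 * τ)) + U ^ 2 / 4 * exp (-ε ^ 2 / (4 * τ)) := by
      field_simp
      ring
    _ ≤ ε ^ 2 / τ ^ 2 * exp (-ε ^ 2 / (4 * τ)) + U ^ 2 / 4 := by
      gcongr
      exact mul_le_of_le_one_right (by positivity) hexp_le_one

lemma hasDerivAt_expNegInvGlue_div {a x : ℝ} (ha : 0 < a) (hx : 0 < x) :
    HasDerivAt (fun y => expNegInvGlue (y / a)) (a / x ^ 2 * exp (-a / x)) x := by
  have hexp := ((hasDerivAt_inv hx.ne').const_mul (-a)).exp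
  refine (hexp.congr_deriv (by ring_nf)).congr_of_eventuallyEq ?_
  filter_upwards [lt_mem_nhds hx] with y hy
  rw [expNegInvGlue, if_neg (div_pos hy ha).not_ge, inv_div, div_eq_mul_inv, neg_mul]

lemma hasDerivAt_heat_majorant_primitive {ε U τ : ℝ} (hε : 0 < ε) (hτ : 0 < τ) :
    HasDerivAt (fun s => 4 * expNegInvGlue (s / (ε ^ 2 / 4)) + U ^ 2 / 4 * s)
      (ε ^ 2 / τ ^ 2 * exp (-ε ^ 2 / (4 * τ)) + U ^ 2 / 4) τ := by
  refine ((((hasDerivAt_expNegInvGlue_div (a := ε ^ 2 / 4) (by positivity) hτ).const_mul 4).add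
    ((hasDerivAt_id τ).const_mul (U ^ 2 / 4)))).congr_deriv ?_
  rw [show -(ε ^ 2 / 4) / τ = -ε ^ 2 / (4 * τ) by ring]
  ring

lemma intervalIntegral_le_sub_of_le_hasDerivAt {f g G : ℝ → ℝ} {a b : ℝ} (hab : a ≤ b)
    (hG : ContinuousOn G (Icc a b)) (hderiv : ∀ x ∈ Ioo a b, HasDerivAt G (g x) x)
    (hf : AEStronglyMeasurable f (volume.restrict (Ioc a b)))
    (hf0 : ∀ x ∈ Ioc a b, 0 ≤ f x) (hfg : ∀ x ∈ Ioc a b, f x ≤ g x) :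
    ∫ x in a..b, f x ≤ G b - G a := by
  have hg_int : IntegrableOn g (Ioc a b) :=
    intervalIntegral.integrableOn_deriv_of_nonneg hG hderiv fun x hx =>
      (hf0 x (Ioo_subset_Ioc_self hx)).trans (hfg x (Ioo_subset_Ioc_self hx))
  have hf_int : IntegrableOn f (Icc a b) := by
    rw [integrableOn_Icc_iff_integrableOn_Ioc]
    refine hg_int.mono' hf ?_
    refine (ae_restrict_iff' measurableSet_Ioc).2 (Filter.Eventually.of_forall fun x hx => ?_)
    rw [Real.norm_of_nonneg (hf0 x hx)]
    exact hfg x hx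
  exact intervalIntegral.integral_le_sub_of_hasDeriv_right_of_le hab hG
    (fun x hx => (hderiv x hx).hasDerivWithinAt) hf_int (fun x hx => hfg x (Ioo_subset_Ioc_self hx))

lemma continuousOn_sq_div_mul_exp_neg_comp_sub {d : ℝ → ℝ} {t : ℝ}
    (hd : ContinuousOn d (Icc 0 t)) :
    ContinuousOn (fun τ => d (t - τ) ^ 2 / (8 * τ ^ 2) * exp (-d (t - τ) ^ 2 / (4 * τ)))
      (Ioc 0 t) := by
  have hdτ : ContinuousOn (fun τ => d (t - τ)) (Ioc 0 t) :=
    hd.comp (by fun_prop) fun τ hτ => ⟨by linarith [hτ.2], by linarith [hτ.1]⟩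
  refine ((hdτ.pow 2).div (by fun_prop) fun τ hτ => ?_).mul
    ((hdτ.pow 2).neg.div (by fun_prop) fun τ hτ => ?_).rexp
  all_goals
    have := hτ.1
    positivity

theorem J1_case1_bound_general (U t ε : ℝ) (d : ℝ → ℝ)
    (ht : 0 < t)
    (hLip : ∀ s₁ ∈ Set.Icc (0:ℝ) t, ∀ s₂ ∈ Set.Icc (0:ℝ) t, |d s₁ - d s₂| ≤ U * |s₁ - s₂|)
    (hmin : IsLeast (d '' Set.Icc (0:ℝ) t) ε) (hε : 0 < ε) (hdt : d t ≤ 2 * ε) :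
    (∫ τ in (0:ℝ)..t, (d (t - τ)) ^ 2 / (8 * τ ^ 2)
        * Real.exp (-(d (t - τ)) ^ 2 / (4 * τ)))
      ≤ 4 + U ^ 2 / 4 * t := by
  have hmem : ∀ τ ∈ Ioc 0 t, t - τ ∈ Icc 0 t := fun τ hτ =>
    ⟨by linarith [hτ.2], by linarith [hτ.1]⟩
  have hd_ge : ∀ τ ∈ Ioc 0 t, ε ≤ d (t - τ) := fun τ hτ => hmin.2 ⟨_, hmem τ hτ, rfl⟩
  have hd_le : ∀ τ ∈ Ioc 0 t, d (t - τ) ≤ 2 * ε + U * τ := fun τ hτ => by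
    have h := hLip _ (hmem τ hτ) t ⟨ht.le, le_rfl⟩
    rw [show t - τ - t = -τ by ring, abs_neg, abs_of_pos hτ.1] at h
    linarith [(abs_le.1 h).2]
  have hd_cont : ContinuousOn d (Icc 0 t) :=
    (LipschitzOnWith.of_dist_le' fun x hx y hy => by
      simpa only [Real.dist_eq] using hLip x hx y hy).continuousOn
  calc _ ≤ (4 * expNegInvGlue (t / (ε ^ 2 / 4)) + U ^ 2 / 4 * t)
        - (4 * expNegInvGlue (0 / (ε ^ 2 / 4)) + U ^ 2 / 4 * 0) :=
      intervalIntegral_le_sub_of_le_hasDerivAt ht.le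
        (by have : Continuous expNegInvGlue := expNegInvGlue.contDiff.continuous (n := 0)
            fun_prop)
        (fun τ hτ => hasDerivAt_heat_majorant_primitive hε hτ.1)
        ((continuousOn_sq_div_mul_exp_neg_comp_sub hd_cont).aestronglyMeasurable measurableSet_Ioc)
        (fun τ hτ => by have := hτ.1; positivity)
        (fun τ hτ => sq_div_mul_exp_neg_le hτ.1 hε.le (hd_ge τ hτ) (hd_le τ hτ))
    _ ≤ 4 + U ^ 2 / 4 * t := by
      have : expNegInvGlue (t / (ε ^ 2 / 4)) ≤ 1 := by
        rw [expNegInvGlue, if_neg (by positivity : 0 < t / (ε ^ 2 / 4)).not_ge]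
        exact exp_le_one_iff.2 (neg_nonpos.2 (by positivity))
      simp only [zero_div, expNegInvGlue.zero]
      linarith

/-- For a `U`-Lipschitz function `d : [0,t] → ℝ` with minimum value `ε > 0` and `d t ≤ 2ε`,
`∫₀^t (d(t-τ)²/(8τ²)) e^{-d(t-τ)²/(4τ)} dτ ≤ 4 + (U²/4) t`. -/
theorem J1_case1_bound (U t ε : ℝ) (d : ℝ → ℝ)
    (hU : 0 ≤ U) (ht : 0 < t)
    (hLip : ∀ s₁ ∈ Set.Icc (0:ℝ) t, ∀ s₂ ∈ Set.Icc (0:ℝ) t, |d s₁ - d s₂| ≤ U * |s₁ - s₂|)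
    (hmin : IsLeast (d '' Set.Icc (0:ℝ) t) ε) (hε : 0 < ε) (hdt : d t ≤ 2 * ε) :
    (∫ τ in (0:ℝ)..t, (d (t - τ)) ^ 2 / (8 * τ ^ 2)
        * Real.exp (-(d (t - τ)) ^ 2 / (4 * τ)))
      ≤ 4 + U ^ 2 / 4 * t :=
  J1_case1_bound_general U t ε d ht hLip hmin hε hdt
end
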